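/- Let y₁,…,y_d ≥ 2 be even integers with d ≥ 2. If Σ_{i=1}^{d−1} (d−i)y_i = Σ_{i=k+1}^{d} y_i for some k with 0 ≤ k ≤ d−1, then χ_la(Sp(y₁,…,y_d)) = d+1. -/

import Mathlib

open SimpleGraph

/-- The induced vertex sum of an edge labeling. -/
noncomputable def vertexSum {V : Type*} (G : SimpleGraph V) (f : Sym2 V → ℕ) (x : V) : ℕ :=
  ∑ᶠ y ∈ G.neighborSet x, f s(x, y)

/-- `f` is a local antimagic labeling of `G`. -/
def IsLocalAntimagic {V : Type*} (G : SimpleGraph V) (f : Sym2 V → ℕ) : Prop :=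
  Set.BijOn f G.edgeSet (Set.Icc 1 G.edgeSet.ncard) ∧
  ∀ ⦃x y : V⦄, G.Adj x y → vertexSum G f x ≠ vertexSum G f y

/-- The number of distinct induced vertex labels of `f`. -/
noncomputable def colorCount {V : Type*} (G : SimpleGraph V) (f : Sym2 V → ℕ) : ℕ :=
  (Set.range (vertexSum G f)).ncard

/-- The local antimagic chromatic number. -/
noncomputable def chiLA {V : Type*} (G : SimpleGraph V) : ℕ :=
  sInf {n | ∃ f : Sym2 V → ℕ, IsLocalAntimagic G f ∧ colorCount G f = n}

/-- A pendant vertex: a vertex of degree 1. -/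
def IsPendant {V : Type*} (G : SimpleGraph V) (x : V) : Prop :=
  (G.neighborSet x).ncard = 1

/-- A pendant edge: an edge incident to a pendant vertex. -/
def IsPendantEdge {V : Type*} (G : SimpleGraph V) (e : Sym2 V) : Prop :=
  e ∈ G.edgeSet ∧ ∃ x ∈ e, IsPendant G x

/-- The spider graph with `d` legs of lengths `y i`: the core is `none`, and leg `i`
consists of vertices `some ⟨i, j⟩` for `j : Fin (y i)`, forming a path from the core. -/
def spider (d : ℕ) (y : Fin d → ℕ) : SimpleGraph (Option (Σ i : Fin d, Fin (y i))) :=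
  SimpleGraph.fromRel (fun u v =>
    ∃ (i : Fin d) (j : Fin (y i)), (u = none ∧ v = some ⟨i, j⟩ ∧ (j : ℕ) = 0) ∨
      (∃ k : Fin (y i), u = some ⟨i, j⟩ ∧ v = some ⟨i, k⟩ ∧ (j : ℕ) + 1 = (k : ℕ)))

/-!
Lower bound: under a local antimagic labeling the `d` leaves carry the labels of the `d` pendant
edges, so they have `d` distinct sums, all at most `m = |E|`; and the edge labelled `m` has an
endpoint of degree two, whose sum exceeds `m`.

Upper bound: along each leg alternate small and large labels, leg `i` taking `y i / 2` of each.
Then every internal vertex sums to `m` or `m + 1`, the leaf of leg `i` to `m - offset i` with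
`offset i = ∑_{i' < i} y_{i'} / 2`, and the hypothesis on `∑ (d - 1 - i) y_i` says precisely
that the core sums to `m - offset k`, the colour of the leaf of leg `k`.
-/

namespace Spider

variable {d : ℕ} {y : Fin d → ℕ}

abbrev LegVertex (y : Fin d → ℕ) := Σ i : Fin d, Fin (y i)

theorem legVertex_ext_iff {p q : LegVertex y} : p = q ↔ p.1 = q.1 ∧ (p.2 : ℕ) = q.2 := by
  refine ⟨fun h => h ▸ ⟨rfl, rfl⟩, fun ⟨h₁, h₂⟩ => ?_⟩
  exact Sigma.ext h₁ ((Fin.heq_ext_iff (congrArg y h₁)).2 h₂)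

def parent (p : LegVertex y) : Option (LegVertex y) :=
  if (p.2 : ℕ) = 0 then none else some ⟨p.1, ⟨p.2 - 1, by omega⟩⟩

theorem parent_eq_none_iff {p : LegVertex y} : parent p = none ↔ (p.2 : ℕ) = 0 := by
  unfold parent
  split_ifs with h <;> simp [h]

theorem parent_eq_some_iff {p q : LegVertex y} :
    parent p = some q ↔ q.1 = p.1 ∧ (q.2 : ℕ) + 1 = p.2 := by
  unfold parent
  split_ifs with h
  · simp only [false_iff]
    omega
  · rw [Option.some_inj, legVertex_ext_iff]
    dsimp only
    omega

theorem parent_ne_some_of_parent_eq {p q : LegVertex y} (h : parent q = some p) :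
    parent p ≠ some q := by
  rw [parent_eq_some_iff] at h
  rw [Ne, parent_eq_some_iff]
  omega

theorem parent_ne_some_self (p : LegVertex y) : parent p ≠ some p := by
  rw [Ne, parent_eq_some_iff]
  omega

theorem adj_iff {u v : Option (LegVertex y)} :
    (spider d y).Adj u v ↔
      (∃ p, u = parent p ∧ v = some p) ∨ (∃ p, v = parent p ∧ u = some p) := by
  have hrel : ∀ u v : Option (LegVertex y),
      (∃ (i : Fin d) (j : Fin (y i)), (u = none ∧ v = some ⟨i, j⟩ ∧ (j : ℕ) = 0) ∨
        (∃ k : Fin (y i), u = some ⟨i, j⟩ ∧ v = some ⟨i, k⟩ ∧ (j : ℕ) + 1 = k)) ↔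
      ∃ p, u = parent p ∧ v = some p := by
    intro u v
    constructor
    · rintro ⟨i, j, ⟨rfl, rfl, hj⟩ | ⟨k, rfl, rfl, hk⟩⟩
      · exact ⟨⟨i, j⟩, (parent_eq_none_iff.2 hj).symm, rfl⟩
      · refine ⟨⟨i, k⟩, ?_, rfl⟩
        exact (parent_eq_some_iff (p := ⟨i, k⟩) (q := ⟨i, j⟩) |>.2 ⟨rfl, hk⟩).symm
    · rintro ⟨⟨i, j⟩, hu, rfl⟩
      rcases hp : parent ⟨i, j⟩ with _ | ⟨i', j'⟩ <;> rw [hp] at hu <;> subst hu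
      · exact ⟨i, j, .inl ⟨rfl, rfl, parent_eq_none_iff.1 hp⟩⟩
      · obtain ⟨rfl, h⟩ := parent_eq_some_iff.1 hp
        exact ⟨i', j', .inr ⟨j, rfl, rfl, h⟩⟩
  rw [spider, fromRel_adj, hrel, hrel]
  constructor
  · exact And.right
  · rintro (⟨p, rfl, rfl⟩ | ⟨p, rfl, rfl⟩)
    · exact ⟨parent_ne_some_self p, .inl ⟨p, rfl, rfl⟩⟩
    · exact ⟨(parent_ne_some_self p).symm, .inr ⟨p, rfl, rfl⟩⟩

def edge (p : LegVertex y) : Sym2 (Option (LegVertex y)) := s(parent p, some p)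

theorem edge_injective : Function.Injective (edge (y := y)) := by
  intro p q h
  rcases Sym2.eq_iff.1 h with ⟨-, h⟩ | ⟨h, h'⟩
  · exact Option.some_inj.1 h
  · exact absurd h (parent_ne_some_of_parent_eq h'.symm)

theorem edgeSet_eq_range : (spider d y).edgeSet = Set.range edge := by
  ext e
  induction e using Sym2.ind with
  | _ u v =>
    rw [mem_edgeSet, adj_iff]
    constructor
    · rintro (⟨p, rfl, rfl⟩ | ⟨p, rfl, rfl⟩)
      · exact ⟨p, rfl⟩
      · exact ⟨p, Sym2.eq_swap⟩
    · rintro ⟨p, hp⟩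
      rcases Sym2.eq_iff.1 hp with ⟨rfl, rfl⟩ | ⟨rfl, rfl⟩
      · exact .inl ⟨p, rfl, rfl⟩
      · exact .inr ⟨p, rfl, rfl⟩

theorem ncard_edgeSet : (spider d y).edgeSet.ncard = ∑ i, y i := by
  rw [edgeSet_eq_range, Set.ncard_range_of_injective edge_injective, Nat.card_sigma]
  simp

theorem neighborSet_none (hy : ∀ i, 0 < y i) :
    (spider d y).neighborSet none = Set.range fun i => some ⟨i, ⟨0, hy i⟩⟩ := by
  ext v
  simp only [mem_neighborSet, adj_iff, Set.mem_range, reduceCtorEq, and_false, exists_false,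
    or_false]
  constructor
  · rintro ⟨p, hp, rfl⟩
    refine ⟨p.1, ?_⟩
    rw [Option.some_inj, legVertex_ext_iff]
    exact ⟨rfl, (parent_eq_none_iff.1 hp.symm).symm⟩
  · rintro ⟨i, rfl⟩
    exact ⟨_, (parent_eq_none_iff.2 rfl).symm, rfl⟩

theorem neighborSet_some (p : LegVertex y) :
    (spider d y).neighborSet (some p) = insert (parent p) (some '' {q | parent q = some p}) := by
  ext v
  simp only [mem_neighborSet, adj_iff, Set.mem_insert_iff, Set.mem_image, Set.mem_ofPred_eq,
    Option.some_inj]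
  constructor
  · rintro (⟨q, hq, rfl⟩ | ⟨q, rfl, rfl⟩)
    · exact .inr ⟨q, hq.symm, rfl⟩
    · exact .inl rfl
  · rintro (rfl | ⟨q, hq, rfl⟩)
    · exact .inr ⟨p, rfl, rfl⟩
    · exact .inl ⟨q, hq.symm, rfl⟩

theorem vertexSum_none (hy : ∀ i, 0 < y i) (f : Sym2 (Option (LegVertex y)) → ℕ) :
    vertexSum (spider d y) f none = ∑ i, f (edge ⟨i, ⟨0, hy i⟩⟩) := by
  have hinj : Function.Injective fun i => (some ⟨i, ⟨0, hy i⟩⟩ : Option (LegVertex y)) :=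
    fun i i' h => (legVertex_ext_iff.1 (Option.some_inj.1 h)).1
  rw [vertexSum, neighborSet_none hy, finsum_mem_range hinj, finsum_eq_sum_of_fintype]
  simp only [edge, (parent_eq_none_iff (p := ⟨_, ⟨0, hy _⟩⟩)).2 rfl]

theorem vertexSum_some_of_succ_eq {p : LegVertex y} (hp : (p.2 : ℕ) + 1 = y p.1)
    (f : Sym2 (Option (LegVertex y)) → ℕ) : vertexSum (spider d y) f (some p) = f (edge p) := by
  have hchildren : {q | parent q = some p} = ∅ := by
    ext q
    simp only [Set.mem_ofPred_eq, parent_eq_some_iff, Set.mem_empty_iff_false, iff_false]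
    rintro ⟨h₁, h₂⟩
    have := q.2.isLt
    have := congrArg y h₁
    omega
  rw [vertexSum, neighborSet_some, hchildren, Set.image_empty, insert_empty_eq,
    finsum_mem_singleton, edge, Sym2.eq_swap]

theorem vertexSum_some_of_parent_eq {p q : LegVertex y} (hq : parent q = some p)
    (f : Sym2 (Option (LegVertex y)) → ℕ) :
    vertexSum (spider d y) f (some p) = f (edge p) + f (edge q) := by
  have hchildren : {r | parent r = some p} = {q} := by
    ext r
    rw [parent_eq_some_iff] at hq
    simp only [Set.mem_ofPred_eq, parent_eq_some_iff, Set.mem_singleton_iff, legVertex_ext_iff]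
    omega
  rw [vertexSum, neighborSet_some, hchildren, Set.image_singleton,
    finsum_mem_pair (parent_ne_some_of_parent_eq hq), edge, Sym2.eq_swap, edge, hq]

theorem exists_lt_vertexSum (hy : ∀ i, 2 ≤ y i) {f : Sym2 (Option (LegVertex y)) → ℕ}
    (hf : ∀ p, 1 ≤ f (edge p)) (p : LegVertex y) :
    ∃ v, f (edge p) < vertexSum (spider d y) f v := by
  have hlt := p.2.isLt
  have hyp := hy p.1
  by_cases hleaf : (p.2 : ℕ) + 1 = y p.1
  · rcases hpar : parent p with _ | r
    · have := parent_eq_none_iff.1 hpar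
      omega
    · refine ⟨some r, ?_⟩
      rw [vertexSum_some_of_parent_eq hpar]
      have := hf r
      omega
  · let q : LegVertex y := ⟨p.1, ⟨p.2 + 1, by omega⟩⟩
    refine ⟨some p, ?_⟩
    rw [vertexSum_some_of_parent_eq (p := p) (q := q) (parent_eq_some_iff.2 ⟨rfl, rfl⟩)]
    have := hf q
    omega

theorem add_one_le_colorCount (hy : ∀ i, 2 ≤ y i) (hd : 0 < d)
    {f : Sym2 (Option (LegVertex y)) → ℕ}
    (hf : Set.BijOn f (spider d y).edgeSet (Set.Icc 1 (∑ i, y i))) :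
    d + 1 ≤ colorCount (spider d y) f := by
  rw [edgeSet_eq_range] at hf
  have hmem : ∀ p, f (edge p) ∈ Set.Icc 1 (∑ i, y i) := fun p => hf.mapsTo ⟨p, rfl⟩
  have hpos : 1 ≤ ∑ i, y i := by
    have := Finset.single_le_sum (fun i _ => Nat.zero_le (y i)) (Finset.mem_univ ⟨0, hd⟩)
    have := hy ⟨0, hd⟩
    omega
  obtain ⟨_, ⟨p, rfl⟩, hp⟩ := hf.surjOn ⟨hpos, le_rfl⟩
  obtain ⟨w, hw⟩ := exists_lt_vertexSum hy (fun p => (hmem p).1) p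
  let leaf (i : Fin d) : LegVertex y := ⟨i, ⟨y i - 1, by have := hy i; omega⟩⟩
  have hleaf (i : Fin d) : vertexSum (spider d y) f (some (leaf i)) = f (edge (leaf i)) :=
    vertexSum_some_of_succ_eq (by have := hy i; dsimp [leaf]; omega) f
  have hinj : Function.Injective fun i => vertexSum (spider d y) f (some (leaf i)) := by
    intro i i' h
    simp only [hleaf] at h
    exact (legVertex_ext_iff.1 (edge_injective (hf.injOn ⟨_, rfl⟩ ⟨_, rfl⟩ h))).1
  have hnot : vertexSum (spider d y) f w ∉
      Set.range fun i => vertexSum (spider d y) f (some (leaf i)) := by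
    rintro ⟨i, hi⟩
    have := (hmem (leaf i)).2
    simp only [hleaf] at hi
    omega
  calc d + 1 = (insert (vertexSum (spider d y) f w)
        (Set.range fun i => vertexSum (spider d y) f (some (leaf i)))).ncard := by
        rw [Set.ncard_insert_of_notMem hnot, Set.ncard_range_of_injective hinj, Nat.card_fin]
    _ ≤ colorCount (spider d y) f := by
      refine Set.ncard_le_ncard ?_ (Set.finite_range _)
      rintro _ (rfl | ⟨i, rfl⟩) <;> exact ⟨_, rfl⟩

def offset (y : Fin d → ℕ) (i : Fin d) : ℕ := ∑ i' ∈ Finset.Iio i, y i' / 2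

theorem offset_add_half (i : Fin d) : offset y i + y i / 2 = ∑ i' ∈ Finset.Iic i, y i' / 2 := by
  rw [offset, Finset.Iic_eq_cons_Iio, Finset.sum_cons, add_comm]

theorem offset_add_half_le (i : Fin d) : offset y i + y i / 2 ≤ ∑ i, y i / 2 := by
  rw [offset_add_half]
  exact Finset.sum_le_sum_of_subset (Finset.subset_univ _)

theorem offset_add_half_le_offset {i i' : Fin d} (h : i < i') :
    offset y i + y i / 2 ≤ offset y i' := by
  rw [offset_add_half]
  exact Finset.sum_le_sum_of_subset fun j hj =>
    Finset.mem_Iio.2 ((Finset.mem_Iic.1 hj).trans_lt h)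

theorem offset_eq_zero_of_val_eq_zero {i : Fin d} (hi : (i : ℕ) = 0) : offset y i = 0 :=
  Finset.sum_eq_zero fun i' hi' => by
    have := Fin.lt_def.1 (Finset.mem_Iio.1 hi')
    omega

theorem sum_offset : ∑ i, offset y i = ∑ i : Fin d, (d - 1 - (i : ℕ)) * (y i / 2) := by
  simp only [offset]
  rw [Finset.sum_comm' (t' := Finset.univ) (s' := Finset.Ioi) (by simp)]
  simp only [Finset.sum_const, Fin.card_Ioi, smul_eq_mul]

theorem sum_eq_two_mul_sum_half (hev : ∀ i, Even (y i)) (s : Finset (Fin d)) :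
    ∑ i ∈ s, y i = 2 * ∑ i ∈ s, y i / 2 := by
  rw [Finset.mul_sum]
  exact Finset.sum_congr rfl fun i _ => (Nat.two_mul_div_two_of_even (hev i)).symm

theorem sum_offset_add_half (hev : ∀ i, Even (y i)) (k : Fin d)
    (hsum : ∑ i : Fin d, (d - 1 - (i : ℕ)) * y i =
      ∑ i : Fin d, if (k : ℕ) ≤ i then y i else 0) :
    ∑ i, (offset y i + y i / 2) = ∑ i, y i - offset y k := by
  have htwice : 2 * ∑ i, offset y i = ∑ i : Fin d, if (k : ℕ) ≤ i then y i else 0 := by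
    rw [← hsum, sum_offset, Finset.mul_sum]
    refine Finset.sum_congr rfl fun i _ => ?_
    rw [mul_left_comm, Nat.two_mul_div_two_of_even (hev i)]
  have hsplit :
      ∑ i, y i = 2 * offset y k + ∑ i : Fin d, if (k : ℕ) ≤ i then y i else 0 := by
    rw [offset, ← sum_eq_two_mul_sum_half hev, ← Finset.filter_gt_eq_Iio, Finset.sum_filter,
      ← Finset.sum_add_distrib]
    refine Finset.sum_congr rfl fun i _ => ?_
    split_ifs <;> omega
  have := offset_add_half_le (y := y) k
  have := sum_eq_two_mul_sum_half hev Finset.univ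
  rw [Finset.sum_add_distrib]
  omega

/- On leg `i` the edges at even depth take the small labels `offset i + 1, …, offset i + y i / 2`
and the others the large labels `m - offset i - y i / 2 + 1, …, m - offset i` (with `m = ∑ y`),
interleaved so that two consecutive edges sum to `m + 1` or `m` and the pendant edge gets
`m - offset i`. -/
def label (y : Fin d → ℕ) (p : LegVertex y) : ℕ :=
  if (p.2 : ℕ) % 2 = 0 then offset y p.1 + (y p.1 - p.2) / 2
  else ∑ i, y i - offset y p.1 - (y p.1 - 1 - p.2) / 2

theorem label_mem_Icc (hev : ∀ i, Even (y i)) (p : LegVertex y) :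
    label y p ∈ Set.Icc 1 (∑ i, y i) := by
  have := offset_add_half_le (y := y) p.1
  have := sum_eq_two_mul_sum_half hev Finset.univ
  have := Nat.even_iff.1 (hev p.1)
  have := p.2.isLt
  rw [Set.mem_Icc, label]
  split_ifs <;> omega

theorem label_ne_of_fst_lt (hev : ∀ i, Even (y i)) {p q : LegVertex y} (h : p.1 < q.1) :
    label y p ≠ label y q := by
  have := offset_add_half_le_offset (y := y) h
  have := offset_add_half_le (y := y) q.1
  have := sum_eq_two_mul_sum_half hev Finset.univ
  have := Nat.even_iff.1 (hev q.1)
  have := p.2.isLt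
  have := q.2.isLt
  unfold label
  split_ifs <;> omega

theorem label_injective (hev : ∀ i, Even (y i)) : Function.Injective (label y) := by
  intro p q h
  rcases lt_trichotomy p.1 q.1 with hlt | heq | hgt
  · exact absurd h (label_ne_of_fst_lt hev hlt)
  · obtain ⟨i, j⟩ := p
    obtain ⟨i', j'⟩ := q
    dsimp only at heq
    subst heq
    have := offset_add_half_le (y := y) i
    have := sum_eq_two_mul_sum_half hev Finset.univ
    have := Nat.even_iff.1 (hev i)
    have := j.isLt
    have := j'.isLt
    refine legVertex_ext_iff.2 ⟨rfl, ?_⟩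
    unfold label at h
    dsimp only at h ⊢
    split_ifs at h <;> omega
  · exact absurd h.symm (label_ne_of_fst_lt hev hgt)

noncomputable def labeling (y : Fin d → ℕ) : Sym2 (Option (LegVertex y)) → ℕ :=
  Function.extend edge (label y) 0

theorem labeling_edge (p : LegVertex y) : labeling y (edge p) = label y p :=
  edge_injective.extend_apply _ _ _

theorem bijOn_labeling (hev : ∀ i, Even (y i)) :
    Set.BijOn (labeling y) (spider d y).edgeSet (Set.Icc 1 (spider d y).edgeSet.ncard) := by
  rw [ncard_edgeSet, edgeSet_eq_range]
  refine ⟨?_, ?_, ?_⟩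
  · rintro _ ⟨p, rfl⟩
    rw [labeling_edge]
    exact label_mem_Icc hev p
  · rintro _ ⟨p, rfl⟩ _ ⟨q, rfl⟩ h
    rw [labeling_edge, labeling_edge] at h
    rw [label_injective hev h]
  · have hsurj := Finset.surjOn_of_injOn_of_card_le (label y) (s := Finset.univ)
      (t := Finset.Icc 1 (∑ i, y i)) (fun p _ => by simpa using label_mem_Icc hev p)
      (label_injective hev).injOn (by simp)
    rintro b hb
    obtain ⟨p, -, rfl⟩ := hsurj (by simpa using hb)
    exact ⟨edge p, ⟨p, rfl⟩, labeling_edge p⟩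

theorem vertexSum_labeling_none (hy : ∀ i, 0 < y i) (hev : ∀ i, Even (y i)) (k : Fin d)
    (hsum : ∑ i : Fin d, (d - 1 - (i : ℕ)) * y i =
      ∑ i : Fin d, if (k : ℕ) ≤ i then y i else 0) :
    vertexSum (spider d y) (labeling y) none = ∑ i, y i - offset y k := by
  rw [vertexSum_none hy, ← sum_offset_add_half hev k hsum]
  simp only [labeling_edge, label, Nat.zero_mod, if_true, Nat.sub_zero]

theorem vertexSum_labeling_some (hev : ∀ i, Even (y i)) (p : LegVertex y) :
    vertexSum (spider d y) (labeling y) (some p) =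
      if (p.2 : ℕ) + 1 = y p.1 then ∑ i, y i - offset y p.1
      else if (p.2 : ℕ) % 2 = 0 then ∑ i, y i + 1 else ∑ i, y i := by
  have := offset_add_half_le (y := y) p.1
  have := sum_eq_two_mul_sum_half hev Finset.univ
  have := Nat.even_iff.1 (hev p.1)
  by_cases hleaf : (p.2 : ℕ) + 1 = y p.1
  · rw [if_pos hleaf, vertexSum_some_of_succ_eq hleaf, labeling_edge, label]
    split_ifs <;> omega
  · rw [if_neg hleaf]
    let q : LegVertex y := ⟨p.1, ⟨p.2 + 1, by have := p.2.isLt; omega⟩⟩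
    rw [vertexSum_some_of_parent_eq (p := p) (q := q) (parent_eq_some_iff.2 ⟨rfl, rfl⟩),
      labeling_edge, labeling_edge]
    simp only [label, q]
    split_ifs <;> omega

theorem isLocalAntimagic_labeling (hy : ∀ i, 2 ≤ y i) (hev : ∀ i, Even (y i)) (k : Fin d)
    (hsum : ∑ i : Fin d, (d - 1 - (i : ℕ)) * y i =
      ∑ i : Fin d, if (k : ℕ) ≤ i then y i else 0) :
    IsLocalAntimagic (spider d y) (labeling y) := by
  have hparent (p : LegVertex y) :
      vertexSum (spider d y) (labeling y) (parent p) ≠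
        vertexSum (spider d y) (labeling y) (some p) := by
    have := hy p.1
    have := Nat.even_iff.1 (hev p.1)
    rw [vertexSum_labeling_some hev]
    rcases hpar : parent p with _ | r
    · rw [vertexSum_labeling_none (fun i => by have := hy i; omega) hev k hsum]
      have := parent_eq_none_iff.1 hpar
      split_ifs <;> omega
    · obtain ⟨hr, hr'⟩ := parent_eq_some_iff.1 hpar
      have := congrArg y hr
      have := p.2.isLt
      rw [vertexSum_labeling_some hev]
      split_ifs <;> omega
  refine ⟨bijOn_labeling hev, fun u v h => ?_⟩
  rcases adj_iff.1 h with ⟨p, rfl, rfl⟩ | ⟨p, rfl, rfl⟩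
  · exact hparent p
  · exact (hparent p).symm

theorem colorCount_labeling_le (hy : ∀ i, 2 ≤ y i) (hev : ∀ i, Even (y i)) (k : Fin d)
    (hsum : ∑ i : Fin d, (d - 1 - (i : ℕ)) * y i =
      ∑ i : Fin d, if (k : ℕ) ≤ i then y i else 0) :
    colorCount (spider d y) (labeling y) ≤ d + 1 := by
  have hrange : Set.range (vertexSum (spider d y) (labeling y)) ⊆
      insert (∑ i, y i + 1) (Set.range fun i => ∑ i, y i - offset y i) := by
    rintro _ ⟨_ | p, rfl⟩
    · rw [vertexSum_labeling_none (fun i => by have := hy i; omega) hev k hsum]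
      exact .inr ⟨k, rfl⟩
    · rw [vertexSum_labeling_some hev]
      split_ifs
      · exact .inr ⟨p.1, rfl⟩
      · exact .inl rfl
      · refine .inr ⟨⟨0, p.1.pos⟩, ?_⟩
        dsimp only
        rw [offset_eq_zero_of_val_eq_zero rfl, Nat.sub_zero]
  calc colorCount (spider d y) (labeling y)
      ≤ (insert (∑ i, y i + 1) (Set.range fun i => ∑ i, y i - offset y i)).ncard :=
        Set.ncard_le_ncard hrange (Set.toFinite _)
    _ ≤ (Set.range fun i => ∑ i, y i - offset y i).ncard + 1 := Set.ncard_insert_le _ _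
    _ ≤ d + 1 := by
      rw [← Set.image_univ]
      grw [Set.ncard_image_le, Set.ncard_univ, Nat.card_fin]

end Spider

theorem stmt9 (d : ℕ) (hd : 2 ≤ d) (y : Fin d → ℕ)
    (hy : ∀ i, 2 ≤ y i ∧ Even (y i))
    (k : ℕ) (hk : k ≤ d - 1)
    (hsum : ∑ i : Fin d, (d - 1 - (i : ℕ)) * y i =
            ∑ i : Fin d, if k ≤ (i : ℕ) then y i else 0) :
    chiLA (spider d y) = d + 1 := by
  have hy₂ (i : Fin d) : 2 ≤ y i := (hy i).1
  have hev (i : Fin d) : Even (y i) := (hy i).2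
  let kf : Fin d := ⟨k, by omega⟩
  have hmem : colorCount (spider d y) (Spider.labeling y) ∈
      {n | ∃ f, IsLocalAntimagic (spider d y) f ∧ colorCount (spider d y) f = n} :=
    ⟨_, Spider.isLocalAntimagic_labeling hy₂ hev kf hsum, rfl⟩
  refine le_antisymm ((Nat.sInf_le hmem).trans
    (Spider.colorCount_labeling_le hy₂ hev kf hsum)) (le_csInf ⟨_, hmem⟩ ?_)
  rintro n ⟨f, ⟨hf, -⟩, rfl⟩
  exact Spider.add_one_le_colorCount hy₂ (by omega) (Spider.ncard_edgeSet (y := y) ▸ hf)
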